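/- arXiv:1504.00769 — 2 statements merged into one kernel-verified Lean document; each statement's English description precedes it below -/
import Mathlib

section
/- For every integer r ≥ 3 and all reals a, b with 0 < a < b ≤ 1 and b − a > r!/r^r, there exists a finite family 𝓕 of r-graphs whose Turán density satisfies a < π(𝓕) < b. (Equivalently, every open interval (a,b) ⊆ (0,1) disjoint from Π_fin^(r) has length at most r!/r^r.) -/
open Filter Topology

/-- An `r`-graph: a finite vertex set (identified with `Fin n`) together with a set of
edges, each of which is an `r`-element subset of the vertex set. -/
structure RGraph (r : ℕ) where
  n : ℕ
  edges : Finset (Finset (Fin n))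
  card_eq : ∀ e ∈ edges, e.card = r

/-- `F` is a subgraph of `G`: there is an injection of the vertices of `F` into the
vertices of `G` carrying every edge of `F` to an edge of `G`. -/
def RGraph.IsSubgraph {r : ℕ} (F G : RGraph r) : Prop :=
  ∃ f : Fin F.n → Fin G.n, Function.Injective f ∧ ∀ e ∈ F.edges, e.image f ∈ G.edges

/-- `G` is `𝓕`-free: no member of `𝓕` is a subgraph of `G`. -/
def RGraph.Free {r : ℕ} (𝓕 : Set (RGraph r)) (G : RGraph r) : Prop :=
  ∀ F ∈ 𝓕, ¬ F.IsSubgraph G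

/-- The Turán function `ex(n, 𝓕)`: the maximum number of edges in an `𝓕`-free
`r`-graph on `n` vertices. -/
noncomputable def exNum (r : ℕ) (𝓕 : Set (RGraph r)) (n : ℕ) : ℕ :=
  sSup {k : ℕ | ∃ G : RGraph r, G.n = n ∧ RGraph.Free 𝓕 G ∧ G.edges.card = k}

/-- `Π_∞^(r)`: the set of Turán densities `π(𝓕) = lim_{n→∞} ex(n,𝓕)/C(n,r)` over all
(possibly infinite, possibly empty) families `𝓕` of `r`-graphs. -/
def turanDensities (r : ℕ) : Set ℝ :=
  {x : ℝ | ∃ 𝓕 : Set (RGraph r),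
    Tendsto (fun n : ℕ => (exNum r 𝓕 n : ℝ) / (n.choose r : ℝ)) atTop (𝓝 x)}

/-!
Fix a pattern `E`, a family of `r`-subsets of a finite set of colours, and let `𝓕` be the finitely
many `r`-graphs on at most `M` vertices that are not `E`-colourable. Blow-ups of `E` are `𝓕`-free,
so `π(𝓕) ≥ r! λ(E)`, where `λ` is the Lagrangian. Conversely an `𝓕`-free graph on `M` vertices is
`E`-colourable, hence has at most `λ(E) M^r` edges; as `ex(n, 𝓕)/C(n, r)` is non-increasing in `n`,
`π(𝓕) ≤ λ(E) M^r / C(M, r) → r! λ(E)`. Deleting an edge of `E` lowers `λ(E)` by at most `r^(-r)`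
(AM-GM), so removing edges one at a time from a large complete pattern, whose Lagrangian is close to
`1/r!`, produces an `E` with `a < r! λ(E) ≤ a + r!/r^r < b`.
-/

open Finset

namespace RGraph

variable {r : ℕ}

lemma card_edges_le_choose (G : RGraph r) : #G.edges ≤ G.n.choose r := by
  simpa using card_le_card fun e he => mem_powersetCard.2 ⟨subset_univ e, G.card_eq e he⟩

lemma Free.of_isSubgraph {𝓕 : Set (RGraph r)} {G H : RGraph r} (hG : G.Free 𝓕)
    (hHG : H.IsSubgraph G) : H.Free 𝓕 := by
  rintro F hF ⟨f, hf, hfE⟩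
  obtain ⟨g, hg, hgE⟩ := hHG
  refine hG F hF ⟨g ∘ f, hg.comp hf, fun e he => ?_⟩
  rw [← image_image]
  exact hgE _ (hfE e he)

abbrev comap (G : RGraph r) {m : ℕ} (f : Fin m ↪ Fin G.n) : RGraph r where
  n := m
  edges := {e ∈ powersetCard r univ | e.map f ∈ G.edges}
  card_eq _ he := (mem_powersetCard.1 (mem_filter.1 he).1).2

lemma comap_isSubgraph (G : RGraph r) {m : ℕ} (f : Fin m ↪ Fin G.n) : (G.comap f).IsSubgraph G :=
  ⟨f, f.injective, fun e he => by
    simpa [← map_eq_image] using (Finset.mem_filter.1 he).2⟩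

lemma card_edges_comap (G : RGraph r) {m : ℕ} (f : Fin m ↪ Fin G.n) :
    #(G.comap f).edges = #{e ∈ G.edges | e ⊆ univ.map f} := by
  refine (card_map (mapEmbedding f).toEmbedding).symm.trans (congrArg card ?_)
  ext e
  simp only [Finset.mem_map, Finset.mem_filter, RelEmbedding.coe_toEmbedding,
    mapEmbedding_apply, subset_map_iff]
  constructor
  · rintro ⟨u, ⟨-, hu⟩, rfl⟩
    exact ⟨hu, u, subset_univ u, rfl⟩
  · rintro ⟨he, u, -, rfl⟩
    exact ⟨u, ⟨by simpa using G.card_eq _ he, he⟩, rfl⟩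

lemma sum_card_filter_notMem_edges (G : RGraph r) :
    ∑ v, #{e ∈ G.edges | v ∉ e} = #G.edges * (G.n - r) := by
  simp_rw [card_filter]
  rw [sum_comm, ← smul_eq_mul, ← sum_const]
  refine sum_congr rfl fun e he => ?_
  rw [← card_filter, filter_not, filter_mem_eq_inter, univ_inter,
    card_sdiff_of_subset (subset_univ e), card_univ, Fintype.card_fin, G.card_eq e he]

end RGraph

variable {r : ℕ}

lemma le_exNum {𝓕 : Set (RGraph r)} (G : RGraph r) (hG : G.Free 𝓕) : #G.edges ≤ exNum r 𝓕 G.n :=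
  le_csSup ⟨G.n.choose r, by rintro _ ⟨H, hH, -, rfl⟩; exact hH ▸ H.card_edges_le_choose⟩
    ⟨G, rfl, hG, rfl⟩

lemma exNum_le_of_forall {𝓕 : Set (RGraph r)} {n : ℕ} {C : ℝ} (hC : 0 ≤ C)
    (h : ∀ G : RGraph r, G.n = n → G.Free 𝓕 → (#G.edges : ℝ) ≤ C) : (exNum r 𝓕 n : ℝ) ≤ C :=
  (Nat.cast_le.2 <| csSup_le' <| by rintro _ ⟨G, hn, hG, rfl⟩; exact Nat.le_floor (h G hn hG)).trans
    (Nat.floor_le hC)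

/-- Averaging over the `n + 1` vertex-deleted subgraphs of `G`. -/
lemma card_edges_mul_choose_le {𝓕 : Set (RGraph r)} {n : ℕ} (G : RGraph r) (hn : G.n = n + 1)
    (hG : G.Free 𝓕) : #G.edges * n.choose r ≤ exNum r 𝓕 n * (n + 1).choose r := by
  obtain ⟨m, E, hE⟩ := G
  subst hn
  set G : RGraph r := ⟨n + 1, E, hE⟩
  have hdel (v : Fin (n + 1)) : #{e ∈ E | v ∉ e} ≤ exNum r 𝓕 n := by
    have hsub (e : Finset (Fin (n + 1))) : e ⊆ univ.map v.succAboveEmb ↔ v ∉ e := by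
      simp [subset_iff, Fin.exists_succAbove_eq_iff]
    simpa [G.card_edges_comap, hsub] using
      le_exNum _ (hG.of_isSubgraph (G.comap_isSubgraph v.succAboveEmb))
  have hsum : #E * (n + 1 - r) ≤ (n + 1) * exNum r 𝓕 n :=
    calc #E * (n + 1 - r) = ∑ v, #{e ∈ E | v ∉ e} := G.sum_card_filter_notMem_edges.symm
      _ ≤ ∑ _v : Fin (n + 1), exNum r 𝓕 n := sum_le_sum fun v _ => hdel v
      _ = (n + 1) * exNum r 𝓕 n := by simp
  refine Nat.le_of_mul_le_mul_right ?_ n.succ_pos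
  calc #E * n.choose r * (n + 1) = (n + 1).choose r * (#E * (n + 1 - r)) := by
        rw [mul_assoc, Nat.choose_mul_succ_eq]; ring
    _ ≤ (n + 1).choose r * ((n + 1) * exNum r 𝓕 n) := Nat.mul_le_mul_left _ hsum
    _ = exNum r 𝓕 n * (n + 1).choose r * (n + 1) := by ring

noncomputable def exDensity (r : ℕ) (𝓕 : Set (RGraph r)) (n : ℕ) : ℝ :=
  exNum r 𝓕 n / n.choose r

lemma exDensity_nonneg (𝓕 : Set (RGraph r)) (n : ℕ) : 0 ≤ exDensity r 𝓕 n := by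
  unfold exDensity; positivity

lemma exDensity_succ_le (𝓕 : Set (RGraph r)) {n : ℕ} (hn : r ≤ n) :
    exDensity r 𝓕 (n + 1) ≤ exDensity r 𝓕 n := by
  have hpos : (0 : ℝ) < n.choose r := by exact_mod_cast Nat.choose_pos hn
  rw [exDensity, div_le_iff₀ (by exact_mod_cast Nat.choose_pos (by omega))]
  refine exNum_le_of_forall (by positivity [exDensity_nonneg 𝓕 n]) fun G hG hfree => ?_
  rw [exDensity, div_mul_eq_mul_div, le_div_iff₀ hpos]
  exact_mod_cast card_edges_mul_choose_le G hG hfree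

lemma exists_tendsto_exDensity (𝓕 : Set (RGraph r)) :
    ∃ x, Tendsto (exDensity r 𝓕) atTop (𝓝 x) ∧ ∀ n, r ≤ n → x ≤ exDensity r 𝓕 n := by
  have hanti : Antitone fun k => exDensity r 𝓕 (k + r) := antitone_nat_of_succ_le fun k => by
    rw [Nat.add_right_comm]; exact exDensity_succ_le 𝓕 (by omega)
  have hlim := tendsto_atTop_ciInf hanti ⟨0, by rintro _ ⟨k, rfl⟩; exact exDensity_nonneg 𝓕 _⟩
  refine ⟨_, (tendsto_add_atTop_iff_nat r).1 hlim, fun n hn => ?_⟩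
  obtain ⟨k, rfl⟩ := Nat.exists_eq_add_of_le' hn
  exact hanti.le_of_tendsto hlim k

section Coloring

variable {α : Type*} [DecidableEq α]

def RGraph.ColorableBy (G : RGraph r) (E : Finset (Finset α)) : Prop :=
  ∃ c : Fin G.n → α, ∀ e ∈ G.edges, e.image c ∈ E

lemma RGraph.ColorableBy.of_isSubgraph {E : Finset (Finset α)} {F G : RGraph r}
    (hG : G.ColorableBy E) (hFG : F.IsSubgraph G) : F.ColorableBy E := by
  obtain ⟨c, hc⟩ := hG
  obtain ⟨f, -, hf⟩ := hFG
  exact ⟨c ∘ f, fun e he => by rw [← image_image]; exact hc _ (hf e he)⟩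

def nonColorable (r : ℕ) (E : Finset (Finset α)) (M : ℕ) : Set (RGraph r) :=
  {F | F.n ≤ M ∧ ¬ F.ColorableBy E}

lemma RGraph.finite_setOf_n_le (r M : ℕ) : {F : RGraph r | F.n ≤ M}.Finite := by
  refine (Set.finite_range fun p : Σ n : Fin (M + 1),
    {E : Finset (Finset (Fin n)) // ∀ e ∈ E, #e = r} => (⟨p.1, p.2.1, p.2.2⟩ : RGraph r)).subset ?_
  rintro ⟨n, E, hE⟩ (hn : n ≤ M)
  exact ⟨⟨⟨n, Nat.lt_succ_of_le hn⟩, E, hE⟩, rfl⟩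

lemma finite_nonColorable (E : Finset (Finset α)) (M : ℕ) : (nonColorable r E M).Finite :=
  (RGraph.finite_setOf_n_le r M).subset fun _ hF => hF.1

lemma RGraph.ColorableBy.free_nonColorable {E : Finset (Finset α)} {M : ℕ} {G : RGraph r}
    (hG : G.ColorableBy E) : G.Free (nonColorable r E M) :=
  fun _ hF hFG => hF.2 (hG.of_isSubgraph hFG)

lemma RGraph.Free.colorableBy {E : Finset (Finset α)} {M : ℕ} {G : RGraph r}
    (hG : G.Free (nonColorable r E M)) (hn : G.n ≤ M) : G.ColorableBy E := by
  by_contra h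
  exact hG G ⟨hn, h⟩ ⟨id, Function.injective_id, by simp⟩

abbrev blowUp (r : ℕ) (E : Finset (Finset α)) {n : ℕ} (c : Fin n → α) : RGraph r where
  n := n
  edges := {S ∈ powersetCard r univ | S.image c ∈ E}
  card_eq _ hS := (mem_powersetCard.1 (mem_filter.1 hS).1).2

lemma colorableBy_blowUp (E : Finset (Finset α)) {n : ℕ} (c : Fin n → α) :
    (blowUp r E c).ColorableBy E :=
  ⟨c, fun _ hS => (mem_filter.1 hS).2⟩

end Coloring

section Counting

variable {V α : Type*} [Fintype V] [DecidableEq V] [DecidableEq α]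

/-- The `#e`-sets with colour set `e` are the transversals of the colour classes of `e`. -/
lemma card_filter_image_eq (c : V → α) (e : Finset α) :
    #{S ∈ powersetCard #e univ | S.image c = e} = ∏ i ∈ e, #{v | c v = i} := by
  rw [← card_pi]
  symm
  have hpi {f : ∀ i ∈ e, V} : f ∈ e.pi (fun i => {v | c v = i}) ↔ ∀ i hi, c (f i hi) = i := by
    simp
  have hinj {f : ∀ i ∈ e, V} (hf : ∀ i hi, c (f i hi) = i) :
      Function.Injective fun i : e => f i.1 i.2 :=
    Function.Injective.of_comp (f := c) fun i j hij => Subtype.ext (by simpa [hf] using hij)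
  refine card_bij (fun f _ => e.attach.image fun i => f i.1 i.2) (fun f hf => ?_)
    (fun f hf g hg hfg => ?_) (fun S hS => ?_)
  · rw [hpi] at hf
    simp only [Finset.mem_filter, mem_powersetCard, subset_univ, true_and,
      card_image_of_injective _ (hinj hf), card_attach, image_image]
    conv_rhs => rw [← attach_image_val (s := e)]
    exact image_congr fun i _ => hf i.1 i.2
  · rw [hpi] at hf hg
    funext i hi
    obtain ⟨j, -, hj⟩ := mem_image.1 (hfg ▸ mem_image_of_mem _ (mem_attach e ⟨i, hi⟩) :
      f i hi ∈ e.attach.image fun i => g i.1 i.2)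
    obtain rfl : j.1 = i := by rw [← hg j.1 j.2, hj, hf]
    exact hj.symm
  · obtain ⟨hScard, hSe⟩ : #S = #e ∧ S.image c = e := by
      simpa [Finset.mem_filter, mem_powersetCard] using hS
    have hsec (i : α) (hi : i ∈ e) : ∃ v ∈ S, c v = i := mem_image.1 (hSe ▸ hi)
    choose f hfS hfc using hsec
    refine ⟨f, hpi.2 hfc, eq_of_subset_of_card_le ?_ ?_⟩
    · exact image_subset_iff.2 fun i _ => hfS i.1 i.2
    · rw [hScard, card_image_of_injective _ (hinj hfc), card_attach]

lemma card_filter_image_mem (c : V → α) {r : ℕ} {E : Finset (Finset α)} (hE : ∀ e ∈ E, #e = r) :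
    #{S ∈ powersetCard r univ | S.image c ∈ E} = ∑ e ∈ E, ∏ i ∈ e, #{v | c v = i} := by
  rw [card_eq_sum_card_fiberwise (s := {S ∈ powersetCard r univ | S.image c ∈ E}) (t := E)
    (f := fun S => S.image c) fun S hS => (Finset.mem_filter.1 hS).2]
  refine sum_congr rfl fun e he => ?_
  rw [filter_filter, ← card_filter_image_eq c e, hE e he]
  congr 1
  exact filter_congr fun S _ => ⟨fun h => h.2, fun h => ⟨h ▸ he, h⟩⟩

end Counting

section Lagrangian

variable {α : Type*}

def lagrangianPoly (E : Finset (Finset α)) (w : α → ℝ) : ℝ := ∑ e ∈ E, ∏ i ∈ e, w i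

lemma continuous_lagrangianPoly (E : Finset (Finset α)) : Continuous (lagrangianPoly E) := by
  unfold lagrangianPoly; fun_prop

lemma lagrangianPoly_div {r : ℕ} {E : Finset (Finset α)} (hE : ∀ e ∈ E, #e = r) (w : α → ℝ)
    (t : ℝ) : lagrangianPoly E (fun i => w i / t) = lagrangianPoly E w / t ^ r := by
  simp only [lagrangianPoly, sum_div]
  exact sum_congr rfl fun e he => by rw [prod_div_distrib, prod_const, hE e he]

variable [Fintype α]

noncomputable def lagrangian (E : Finset (Finset α)) : ℝ :=
  sSup (lagrangianPoly E '' stdSimplex ℝ α)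

lemma lagrangianPoly_le_lagrangian {E : Finset (Finset α)} {w : α → ℝ} (hw : w ∈ stdSimplex ℝ α) :
    lagrangianPoly E w ≤ lagrangian E :=
  le_csSup ((isCompact_stdSimplex ℝ α).image (continuous_lagrangianPoly E)).bddAbove ⟨w, hw, rfl⟩

lemma stdSimplex_nonempty [Nonempty α] : (stdSimplex ℝ α).Nonempty :=
  Set.nonempty_coe_sort.1 inferInstance

lemma lagrangian_le [Nonempty α] {E : Finset (Finset α)} {C : ℝ}
    (h : ∀ w ∈ stdSimplex ℝ α, lagrangianPoly E w ≤ C) : lagrangian E ≤ C :=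
  csSup_le (stdSimplex_nonempty.image _) (Set.forall_mem_image.2 h)

lemma lagrangian_nonneg [Nonempty α] (E : Finset (Finset α)) : 0 ≤ lagrangian E := by
  obtain ⟨w, hw⟩ := stdSimplex_nonempty (α := α)
  exact (sum_nonneg fun e _ => prod_nonneg fun i _ => hw.1 i).trans
    (lagrangianPoly_le_lagrangian hw)

lemma lagrangian_empty [Nonempty α] : lagrangian (∅ : Finset (Finset α)) = 0 :=
  le_antisymm (lagrangian_le fun _ _ => by simp [lagrangianPoly]) (lagrangian_nonneg ∅)

lemma prod_le_inv_card_pow {w : α → ℝ} (hw : w ∈ stdSimplex ℝ α) (e : Finset α) :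
    ∏ i ∈ e, w i ≤ ((#e : ℝ)⁻¹) ^ #e := by
  rcases e.eq_empty_or_nonempty with rfl | he
  · simp
  have hcard : (0 : ℝ) < #e := by exact_mod_cast he.card_pos
  have hsum : ∑ i ∈ e, w i ≤ 1 :=
    hw.2 ▸ sum_le_sum_of_subset_of_nonneg (subset_univ e) fun i _ _ => hw.1 i
  have hgm := Real.geom_mean_le_arith_mean e (fun _ => 1) w (fun _ _ => zero_le_one)
    (by simpa using hcard) fun i _ => hw.1 i
  simp only [Real.rpow_one, sum_const, nsmul_eq_mul, mul_one, one_mul] at hgm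
  have hprod : 0 ≤ ∏ i ∈ e, w i := prod_nonneg fun i _ => hw.1 i
  calc ∏ i ∈ e, w i = ((∏ i ∈ e, w i) ^ ((#e : ℝ)⁻¹)) ^ #e :=
        (Real.rpow_inv_natCast_pow hprod he.card_pos.ne').symm
    _ ≤ ((#e : ℝ)⁻¹) ^ #e := by
        gcongr
        calc _ ≤ (∑ i ∈ e, w i) / #e := hgm
          _ ≤ 1 / #e := by gcongr
          _ = (#e : ℝ)⁻¹ := one_div _

lemma lagrangian_le_lagrangian_erase_add [Nonempty α] [DecidableEq α] {E : Finset (Finset α)}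
    {e : Finset α} (he : e ∈ E) : lagrangian E ≤ lagrangian (E.erase e) + ((#e : ℝ)⁻¹) ^ #e :=
  lagrangian_le fun w hw => by
    rw [lagrangianPoly, ← sum_erase_add E _ he]
    exact add_le_add (lagrangianPoly_le_lagrangian hw) (prod_le_inv_card_pow hw e)

lemma choose_div_pow_le_lagrangian_powersetCard [Nonempty α] (r : ℕ) :
    ((Fintype.card α).choose r : ℝ) / (Fintype.card α : ℝ) ^ r
      ≤ lagrangian (powersetCard r (univ : Finset α)) := by
  have hN : (0 : ℝ) < Fintype.card α := by exact_mod_cast Fintype.card_pos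
  have huniform : (fun _ => 1 / Fintype.card α : α → ℝ) ∈ stdSimplex ℝ α :=
    ⟨fun _ => by positivity, by simp [hN.ne']⟩
  convert lagrangianPoly_le_lagrangian huniform using 1
  rw [lagrangianPoly_div (fun e he => (mem_powersetCard.1 he).2)]
  simp [lagrangianPoly]

end Lagrangian

lemma Finset.exists_subset_lt_le_add {β : Type*} [DecidableEq β] {f : Finset β → ℝ} {t δ : ℝ}
    {U : Finset β} (h₀ : f ∅ ≤ t) (hU : t < f U)
    (hstep : ∀ s ⊆ U, ∀ e ∈ s, f s ≤ f (s.erase e) + δ) : ∃ s ⊆ U, t < f s ∧ f s ≤ t + δ := by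
  induction U using Finset.induction_on with
  | empty => linarith
  | insert a U ha ih =>
    by_cases hUt : t < f U
    · obtain ⟨s, hs, hfs⟩ := ih hUt fun s hs => hstep s (hs.trans (subset_insert a U))
      exact ⟨s, hs.trans (subset_insert a U), hfs⟩
    · have := hstep _ Subset.rfl a (mem_insert_self a U)
      rw [erase_insert ha] at this
      exact ⟨insert a U, Subset.rfl, hU, by linarith⟩

lemma tendsto_pow_div_choose (r : ℕ) :
    Tendsto (fun n : ℕ => (n : ℝ) ^ r / n.choose r) atTop (𝓝 r.factorial) := by
  have hchoose : ∀ᶠ n : ℕ in atTop, (n.choose r : ℝ) ≠ 0 :=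
    (eventually_ge_atTop r).mono fun n hn => by exact_mod_cast (Nat.choose_pos hn).ne'
  have h := ((Asymptotics.isEquivalent_iff_tendsto_one hchoose).1
    (isEquivalent_choose r).symm).const_mul (r.factorial : ℝ)
  rw [mul_one] at h
  refine h.congr fun n => ?_
  simp only [Pi.div_apply]
  field_simp

section Pattern

variable {α : Type*} [Fintype α] [DecidableEq α] {E : Finset (Finset α)}

lemma RGraph.ColorableBy.card_edges_le (hE : ∀ e ∈ E, #e = r) {G : RGraph r}
    (hG : G.ColorableBy E) (hn : 0 < G.n) : (#G.edges : ℝ) ≤ lagrangian E * G.n ^ r := by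
  obtain ⟨c, hc⟩ := hG
  set N : α → ℝ := fun i => #{v | c v = i}
  have hN : ∑ i, N i = G.n := by
    simp only [N]
    exact_mod_cast (card_eq_sum_card_fiberwise (s := univ) (t := univ) (f := c)
      fun _ _ => mem_coe.2 (mem_univ _)).symm.trans (by simp)
  have hw : (fun i => N i / G.n) ∈ stdSimplex ℝ α :=
    ⟨fun i => by positivity, by rw [← sum_div, hN, div_self (by positivity)]⟩
  have hcount : #G.edges ≤ #{S ∈ powersetCard r univ | S.image c ∈ E} :=
    card_le_card fun e he =>
      Finset.mem_filter.2 ⟨mem_powersetCard.2 ⟨subset_univ e, G.card_eq e he⟩, hc e he⟩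
  rw [card_filter_image_mem c hE] at hcount
  calc (#G.edges : ℝ) ≤ lagrangianPoly E N := by
        simp only [lagrangianPoly, N]; exact_mod_cast hcount
    _ = lagrangianPoly E (fun i => N i / G.n) * G.n ^ r := by
        rw [lagrangianPoly_div hE, div_mul_cancel₀ _ (by positivity)]
    _ ≤ lagrangian E * G.n ^ r := by gcongr; exact lagrangianPoly_le_lagrangian hw

lemma exists_fiber_card_ge [Nonempty α] (k : α → ℕ) {n : ℕ} (hk : ∑ i, k i ≤ n) :
    ∃ c : Fin n → α, ∀ i, k i ≤ #{v | c v = i} := by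
  obtain ⟨ι⟩ : Nonempty ((Σ i, Fin (k i)) ↪ Fin n) :=
    Function.Embedding.nonempty_of_card_le (by simpa using hk)
  refine ⟨Function.extend ι Sigma.fst fun _ => Classical.arbitrary α, fun i => ?_⟩
  calc k i = #(univ : Finset (Fin (k i))) := by simp
    _ ≤ _ := card_le_card_of_injOn (fun j => ι ⟨i, j⟩)
        (fun j _ => by simp [ι.injective.extend_apply])
        (fun j _ j' _ h => by simpa using ι.injective h)

lemma sum_prod_le_exNum_nonColorable [Nonempty α] (hE : ∀ e ∈ E, #e = r) (M : ℕ) (k : α → ℕ)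
    {n : ℕ} (hk : ∑ i, k i ≤ n) : ∑ e ∈ E, ∏ i ∈ e, k i ≤ exNum r (nonColorable r E M) n := by
  obtain ⟨c, hc⟩ := exists_fiber_card_ge k hk
  calc ∑ e ∈ E, ∏ i ∈ e, k i ≤ ∑ e ∈ E, ∏ i ∈ e, #{v | c v = i} :=
        sum_le_sum fun e _ => prod_le_prod' fun i _ => hc i
    _ = #(blowUp r E c).edges := (card_filter_image_mem c hE).symm
    _ ≤ exNum r (nonColorable r E M) n := le_exNum _ (colorableBy_blowUp E c).free_nonColorable

lemma exDensity_nonColorable_le [Nonempty α] (hE : ∀ e ∈ E, #e = r) {M : ℕ} (hM : 0 < M) :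
    exDensity r (nonColorable r E M) M ≤ lagrangian E * M ^ r / M.choose r := by
  unfold exDensity
  gcongr
  refine exNum_le_of_forall (by positivity [lagrangian_nonneg E]) fun G hG hfree => ?_
  subst hG
  exact (hfree.colorableBy le_rfl).card_edges_le hE hM

/-- Lower bound from the blow-ups of `E` with colour classes of sizes `⌊w_i n⌋`. -/
lemma factorial_mul_lagrangian_le [Nonempty α] (hE : ∀ e ∈ E, #e = r) {M : ℕ} {x : ℝ}
    (hx : Tendsto (exDensity r (nonColorable r E M)) atTop (𝓝 x)) :
    r.factorial * lagrangian E ≤ x := by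
  have hfac : (0 : ℝ) < r.factorial := by positivity
  rw [← le_div_iff₀' hfac]
  refine lagrangian_le fun w hw => (le_div_iff₀ hfac).2 ?_
  set k : ℕ → α → ℕ := fun n i => ⌊w i * n⌋₊
  have hk (n : ℕ) : ∑ i, k n i ≤ n := by
    have : ∑ i, (k n i : ℝ) ≤ n := calc
      _ ≤ ∑ i, w i * n := sum_le_sum fun i _ => Nat.floor_le (by have := hw.1 i; positivity)
      _ = n := by rw [← sum_mul, hw.2, one_mul]
    exact_mod_cast this
  have hlim : Tendsto (fun n : ℕ => lagrangianPoly E (fun i => (k n i : ℝ) / n) *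
      ((n : ℝ) ^ r / n.choose r)) atTop (𝓝 (lagrangianPoly E w * r.factorial)) :=
    (((continuous_lagrangianPoly E).tendsto w).comp (tendsto_pi_nhds.2 fun i =>
      (tendsto_nat_floor_mul_div_atTop (hw.1 i)).comp tendsto_natCast_atTop_atTop)).mul
      (tendsto_pow_div_choose r)
  refine le_of_tendsto_of_tendsto hlim hx (eventually_gt_atTop 0 |>.mono fun n hn => ?_)
  have hn : (0 : ℝ) < n := by exact_mod_cast hn
  beta_reduce
  rw [lagrangianPoly_div hE, div_mul_div_cancel₀ (by positivity), exDensity]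
  gcongr
  simp only [lagrangianPoly]
  exact_mod_cast sum_prod_le_exNum_nonColorable hE M (k n) (hk n)

end Pattern

lemma exists_lt_lagrangian_powersetCard {t : ℝ} (ht : t < (r.factorial : ℝ)⁻¹) :
    ∃ T : ℕ, t < lagrangian (powersetCard r (univ : Finset (Fin (T + 1)))) := by
  have hlim := ((tendsto_pow_div_choose r).inv₀ (by positivity)).comp (tendsto_add_atTop_nat 1)
  obtain ⟨T, hT⟩ := (hlim.eventually (lt_mem_nhds ht)).exists
  refine ⟨T, hT.trans_le ?_⟩
  simpa using choose_div_pow_le_lagrangian_powersetCard (α := Fin (T + 1)) r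

lemma exists_factorial_mul_lagrangian_mem_Ioc {a : ℝ} (ha : 0 ≤ a) (ha1 : a < 1) :
    ∃ (T : ℕ) (E : Finset (Finset (Fin (T + 1)))), (∀ e ∈ E, #e = r) ∧
      r.factorial * lagrangian E ∈ Set.Ioc a (a + r.factorial / (r : ℝ) ^ r) := by
  have hfac : (0 : ℝ) < r.factorial := by positivity
  obtain ⟨T, hT⟩ := exists_lt_lagrangian_powersetCard (r := r) (t := a / r.factorial)
    (by rw [← one_div]; gcongr)
  obtain ⟨E, hEK, hEa, hEle⟩ := exists_subset_lt_le_add (f := lagrangian) (δ := ((r : ℝ)⁻¹) ^ r)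
    (by rw [lagrangian_empty]; positivity) hT fun s hs e he => by
      simpa [(mem_powersetCard.1 (hs he)).2] using lagrangian_le_lagrangian_erase_add he
  refine ⟨T, E, fun e he => (mem_powersetCard.1 (hEK he)).2, (div_lt_iff₀' hfac).1 hEa, ?_⟩
  calc _ ≤ r.factorial * (a / r.factorial + ((r : ℝ)⁻¹) ^ r) := by gcongr
    _ = a + r.factorial / (r : ℝ) ^ r := by
      rw [mul_add, mul_div_cancel₀ _ hfac.ne', inv_pow, div_eq_mul_inv]

/-- For every `r ≥ 3` and all reals `0 < a < b ≤ 1` with `b - a > r!/r^r`, there is a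
finite family `𝓕` of `r`-graphs whose Turán density `π(𝓕)` satisfies `a < π(𝓕) < b`. -/
theorem stmt2 (r : ℕ) (hr : 3 ≤ r) (a b : ℝ)
    (ha : 0 < a) (hab : a < b) (hb : b ≤ 1)
    (hlen : (r.factorial : ℝ) / (r : ℝ) ^ r < b - a) :
    ∃ 𝓕 : Set (RGraph r), 𝓕.Finite ∧ ∃ x : ℝ,
      Tendsto (fun n : ℕ => (exNum r 𝓕 n : ℝ) / (n.choose r : ℝ)) atTop (𝓝 x) ∧
      a < x ∧ x < b := by
  obtain ⟨T, E, hE, hEa, hEle⟩ := exists_factorial_mul_lagrangian_mem_Ioc (r := r) ha.le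
    (hab.trans_le hb)
  obtain ⟨M, hMb, hrM⟩ : ∃ M : ℕ, lagrangian E * M ^ r / M.choose r < b ∧ r ≤ M := by
    have hlim := ((tendsto_pow_div_choose r).const_mul (lagrangian E)).eventually
      (gt_mem_nhds (by linarith : lagrangian E * r.factorial < b))
    simpa only [mul_div_assoc] using (hlim.and (eventually_ge_atTop r)).exists
  obtain ⟨x, hx, hx_le⟩ := exists_tendsto_exDensity (nonColorable r E M)
  refine ⟨_, finite_nonColorable E M, x, hx, hEa.trans_le (factorial_mul_lagrangian_le hE hx), ?_⟩
  calc x ≤ exDensity r _ M := hx_le M hrM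
    _ ≤ lagrangian E * M ^ r / M.choose r := exDensity_nonColorable_le hE (by omega)
    _ < b := hMb
end

section
/- Let r ≥ 2 and m ≥ 1 be integers, P an r-pattern on [m], and 𝓕 a family of r-graphs such that every blow-up P((V_1,…,V_m)) (over all choices of disjoint finite sets V_1,…,V_m) is 𝓕-free. Then π(𝓕) ≥ Λ_P. -/
/-!
Fix `x` in the simplex and split `[n]` into parts `V_i` with `|V_i| ≥ x_i n - 1`. The blow-up
`P((V_1,…,V_m))` is `𝓕`-free, and choosing `D i` vertices in each part for every profile
`D ∈ P` gives it at least `∑_D ∏_i C(|V_i|, D i)` edges. As `C(s, d) ≥ t^d / d!` whenever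
`t + d ≤ s + 1`, this is at least `n^r λ_P(y) / r!` for `y_i = max(x_i - r/n, 0)`, while
`C(n, r) ≤ n^r / r!`. Hence `ex(n, 𝓕) / C(n, r) ≥ λ_P(y)`, and `y → x` with `λ_P` continuous.
-/

open Filter Topology

/-- The Lagrange polynomial `λ_P(x) = r! · Σ_{D∈P} Π_i x_i^{D(i)}/D(i)!` of an
`r`-pattern `P` on `[m]`, where an `r`-multiset on `[m]` is encoded by its multiplicity
function `D : Fin m → ℕ` (with `Σ_i D(i) = r`). -/
noncomputable def lagrangePolyP (r m : ℕ) (P : Finset (Fin m → ℕ)) (x : Fin m → ℝ) : ℝ :=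
  (r.factorial : ℝ) * ∑ D ∈ P, ∏ i, (x i) ^ (D i) / ((D i).factorial : ℝ)

/-- The Lagrangian `Λ_P`: the maximum of `λ_P` over the standard simplex `𝕊_m`. -/
noncomputable def lagrangianP (r m : ℕ) (P : Finset (Fin m → ℕ)) : ℝ :=
  sSup (lagrangePolyP r m P '' stdSimplex ℝ (Fin m))

/-- The blow-up `P((V_1,…,V_m))` of an `r`-pattern `P` with respect to sets
`V_1,…,V_m ⊆ [n]`: the `r`-graph on `[n]` whose edges are the `r`-subsets `X` whose
profile `i ↦ |X ∩ V_i|` lies in `P`. -/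
def blowupGraph (r n m : ℕ) (P : Finset (Fin m → ℕ)) (V : Fin m → Finset (Fin n)) :
    RGraph r where
  n := n
  edges := (Finset.powersetCard r (Finset.univ : Finset (Fin n))).filter
    (fun X : Finset (Fin n) => (fun i => (X ∩ V i).card) ∈ P)
  card_eq := fun e he => (Finset.mem_powersetCard.mp (Finset.mem_filter.mp he).1).2

open Finset

section Turan

variable {r : ℕ}

lemma RGraph.card_edges_le_choose_s12 (G : RGraph r) : #G.edges ≤ G.n.choose r :=
  calc #G.edges ≤ #(powersetCard r (univ : Finset (Fin G.n))) :=
        card_le_card fun e he => mem_powersetCard.mpr ⟨subset_univ e, G.card_eq e he⟩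
    _ = G.n.choose r := by simp

lemma bddAbove_card_edges_free (𝓕 : Set (RGraph r)) (n : ℕ) :
    BddAbove {k : ℕ | ∃ G : RGraph r, G.n = n ∧ G.Free 𝓕 ∧ #G.edges = k} :=
  ⟨n.choose r, by rintro _ ⟨G, rfl, -, rfl⟩; exact G.card_edges_le_choose_s12⟩

lemma exNum_le_choose (𝓕 : Set (RGraph r)) (n : ℕ) : exNum r 𝓕 n ≤ n.choose r :=
  csSup_le' (by rintro _ ⟨G, rfl, -, rfl⟩; exact G.card_edges_le_choose_s12)

lemma RGraph.Free.card_edges_le_exNum {𝓕 : Set (RGraph r)} {G : RGraph r} (hG : G.Free 𝓕) :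
    #G.edges ≤ exNum r 𝓕 G.n :=
  le_csSup (bddAbove_card_edges_free 𝓕 G.n) ⟨G, rfl, hG, rfl⟩

lemma exNum_div_choose_le_one (𝓕 : Set (RGraph r)) (n : ℕ) :
    (exNum r 𝓕 n : ℝ) / n.choose r ≤ 1 :=
  div_le_one_of_le₀ (mod_cast exNum_le_choose 𝓕 n) (Nat.cast_nonneg _)

end Turan

lemma biUnion_inter_eq_of_subset {ι α : Type*} [Fintype ι] [DecidableEq ι] [DecidableEq α]
    {V S : ι → Finset α} (hV : ∀ i j, i ≠ j → Disjoint (V i) (V j)) (hS : ∀ i, S i ⊆ V i)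
    (j : ι) : univ.biUnion S ∩ V j = S j := by
  ext a
  simp only [mem_inter, mem_biUnion, mem_univ, true_and]
  refine ⟨fun ⟨⟨i, hai⟩, haj⟩ => ?_, fun ha => ⟨⟨j, ha⟩, hS j ha⟩⟩
  obtain rfl | hij := eq_or_ne i j
  · exact hai
  · exact absurd haj (disjoint_left.mp (hV i j hij) (hS i hai))

lemma exists_partition_of_sum_eq {m n : ℕ} (s : Fin m → ℕ) (hs : ∑ i, s i = n) :
    ∃ V : Fin m → Finset (Fin n), (∀ i j, i ≠ j → Disjoint (V i) (V j)) ∧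
      univ.biUnion V = univ ∧ ∀ i, #(V i) = s i := by
  subst hs
  let e : (Σ i, Fin (s i)) ≃ Fin (∑ i, s i) := finSigmaFinEquiv
  refine ⟨fun i => univ.map ((Function.Embedding.sigmaMk i).trans e.toEmbedding),
    fun i j hij => ?_, eq_univ_of_forall fun v => ?_, fun i => by simp⟩
  · simp only [disjoint_left, Finset.mem_map, mem_univ, true_and]
    rintro _ ⟨a, rfl⟩ ⟨b, hb⟩
    exact hij (congrArg Sigma.fst (e.injective hb)).symm
  · exact mem_biUnion.mpr ⟨(e.symm v).1, mem_univ _,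
      Finset.mem_map.mpr ⟨(e.symm v).2, mem_univ _, by simp⟩⟩

lemma exists_sum_eq_and_mul_le_add_one {ι : Type*} [Fintype ι] [DecidableEq ι] {x : ι → ℝ}
    (hx : x ∈ stdSimplex ℝ ι) (n : ℕ) :
    ∃ s : ι → ℕ, ∑ i, s i = n ∧ ∀ i, x i * n ≤ s i + 1 := by
  obtain ⟨hx0, hx1⟩ := hx
  have : Nonempty ι := by
    by_contra h
    simp [not_nonempty_iff.mp h] at hx1
  let i₀ : ι := Classical.arbitrary ι
  let a : ι → ℕ := fun i => ⌊x i * n⌋₊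
  have ha : ∑ i, a i ≤ n := by
    have : (∑ i, a i : ℝ) ≤ n := calc
      (∑ i, a i : ℝ) ≤ ∑ i, x i * n :=
          sum_le_sum fun i _ => Nat.floor_le (mul_nonneg (hx0 i) n.cast_nonneg)
      _ = n := by rw [← sum_mul, hx1, one_mul]
    exact_mod_cast this
  refine ⟨fun i => a i + if i = i₀ then n - ∑ j, a j else 0, ?_, fun i => ?_⟩
  · rw [sum_add_distrib, sum_ite_eq' univ i₀]
    simp only [mem_univ, if_true]
    omega
  · calc x i * n ≤ a i + 1 := (Nat.lt_floor_add_one _).le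
      _ ≤ _ := by gcongr; exact_mod_cast Nat.le_add_right _ _

lemma pow_div_factorial_le_choose {a d : ℕ} {t : ℝ} (ht : 0 ≤ t) (h : t + d ≤ a + 1) :
    t ^ d / (d.factorial : ℝ) ≤ a.choose d := by
  have hd : d ≤ a + 1 := by exact_mod_cast (le_add_of_nonneg_left ht).trans h
  refine le_trans ?_ (Nat.pow_le_choose d a)
  gcongr
  rw [Nat.cast_sub hd]
  push_cast
  linarith

lemma max_sub_pow_div_factorial_le_choose {a d r : ℕ} {u : ℝ} (hu : u ≤ a + 1) (hd : d ≤ r) :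
    max (u - r) 0 ^ d / (d.factorial : ℝ) ≤ a.choose d := by
  rcases le_total (u - r) 0 with h | h
  · rw [max_eq_right h]
    rcases d.eq_zero_or_pos with rfl | hd0
    · simp
    · rw [zero_pow hd0.ne', zero_div]
      positivity
  · rw [max_eq_left h]
    refine pow_div_factorial_le_choose h ?_
    have : (d : ℝ) ≤ r := by exact_mod_cast hd
    linarith

lemma sum_prod_choose_le_card_edges_blowupGraph {r n m : ℕ} {P : Finset (Fin m → ℕ)}
    (hP : ∀ D ∈ P, ∑ i, D i = r) {V : Fin m → Finset (Fin n)}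
    (hV : ∀ i j, i ≠ j → Disjoint (V i) (V j)) :
    ∑ D ∈ P, ∏ i, (#(V i)).choose (D i) ≤ #(blowupGraph r n m P V).edges := by
  let T := P.sigma fun D => Fintype.piFinset fun i => (V i).powersetCard (D i)
  have mem_T : ∀ p ∈ T, p.1 ∈ P ∧ ∀ i, p.2 i ⊆ V i ∧ #(p.2 i) = p.1 i := by
    simp [T, mem_powersetCard]
  calc ∑ D ∈ P, ∏ i, (#(V i)).choose (D i) = #T := by
        simp [T, card_sigma, Fintype.card_piFinset, card_powersetCard]
    _ ≤ _ := by
      refine card_le_card_of_injOn (fun p => univ.biUnion p.2) (fun p hp => ?_)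
        (fun p hp q hq hpq => ?_)
      · obtain ⟨hD, hS⟩ := mem_T p (mem_coe.mp hp)
        have hinter := biUnion_inter_eq_of_subset hV fun i => (hS i).1
        have hcard : #(univ.biUnion p.2) = r := by
          rw [card_biUnion fun i _ j _ hij =>
            (hV i j hij).mono (hS i).1 (hS j).1, ← hP p.1 hD]
          exact sum_congr rfl fun i _ => (hS i).2
        have hprofile : (fun i => #(univ.biUnion p.2 ∩ V i)) = p.1 :=
          funext fun i => by rw [hinter, (hS i).2]
        exact mem_coe.mpr (mem_filter.mpr
          ⟨mem_powersetCard.mpr ⟨subset_univ _, hcard⟩, hprofile ▸ hD⟩)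
      · obtain ⟨-, hSp⟩ := mem_T p (mem_coe.mp hp)
        obtain ⟨-, hSq⟩ := mem_T q (mem_coe.mp hq)
        have hparts : p.2 = q.2 := funext fun j => by
          rw [← biUnion_inter_eq_of_subset hV (fun i => (hSp i).1) j,
            ← biUnion_inter_eq_of_subset hV (fun i => (hSq i).1) j]
          exact congrArg (· ∩ V j) hpq
        have hprofiles : p.1 = q.1 := funext fun j => by rw [← (hSp j).2, ← (hSq j).2, hparts]
        exact Sigma.ext hprofiles (heq_of_eq hparts)

section Lagrange

variable {r m : ℕ} {P : Finset (Fin m → ℕ)}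

lemma continuous_lagrangePolyP : Continuous (lagrangePolyP r m P) := by
  unfold lagrangePolyP
  fun_prop

lemma lagrangePolyP_nonneg {x : Fin m → ℝ} (hx : 0 ≤ x) : 0 ≤ lagrangePolyP r m P x := by
  unfold lagrangePolyP
  exact mul_nonneg (Nat.cast_nonneg _) (sum_nonneg fun D _ => prod_nonneg fun i _ =>
    div_nonneg (pow_nonneg (hx i) _) (Nat.cast_nonneg _))

lemma lagrangePolyP_smul (hP : ∀ D ∈ P, ∑ i, D i = r) (c : ℝ) (x : Fin m → ℝ) :
    lagrangePolyP r m P (c • x) = c ^ r * lagrangePolyP r m P x := by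
  simp only [lagrangePolyP, Pi.smul_apply, smul_eq_mul, mul_pow, mul_div_assoc,
    prod_mul_distrib, prod_pow_eq_pow_sum, mul_sum]
  exact sum_congr rfl fun D hD => by rw [hP D hD]; ring

lemma lagrangePolyP_max_sub_le (hP : ∀ D ∈ P, ∑ i, D i = r) (s : Fin m → ℕ) {u : Fin m → ℝ}
    (hu : ∀ i, u i ≤ s i + 1) :
    lagrangePolyP r m P (fun i => max (u i - r) 0) ≤
      r.factorial * ∑ D ∈ P, ∏ i, ((s i).choose (D i) : ℝ) := by
  unfold lagrangePolyP
  gcongr with D hD i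
  exact max_sub_pow_div_factorial_le_choose (hu i)
      (hP D hD ▸ single_le_sum (fun j _ => Nat.zero_le (D j)) (mem_univ i))

lemma tendsto_lagrangePolyP_max_sub_div {x : Fin m → ℝ} (hx : 0 ≤ x) (c : ℝ) :
    Tendsto (fun n : ℕ => lagrangePolyP r m P (fun i => max (x i - c / n) 0)) atTop
      (𝓝 (lagrangePolyP r m P x)) := by
  refine (continuous_lagrangePolyP.tendsto x).comp (tendsto_pi_nhds.mpr fun i => ?_)
  simpa [max_eq_left (show 0 ≤ x i from hx i)] using
    ((tendsto_const_nhds (x := x i)).sub (tendsto_const_div_atTop_nhds_zero_nat c)).max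
      (tendsto_const_nhds (x := (0 : ℝ)))

end Lagrange

lemma sum_prod_choose_le_exNum {r m n : ℕ} {P : Finset (Fin m → ℕ)}
    (hP : ∀ D ∈ P, ∑ i, D i = r) {𝓕 : Set (RGraph r)} (hfree : ∀ V : Fin m → Finset (Fin n),
      (∀ i j, i ≠ j → Disjoint (V i) (V j)) → univ.biUnion V = univ →
      RGraph.Free 𝓕 (blowupGraph r n m P V))
    (s : Fin m → ℕ) (hs : ∑ i, s i = n) :
    ∑ D ∈ P, ∏ i, (s i).choose (D i) ≤ exNum r 𝓕 n := by
  obtain ⟨V, hdisj, hcover, hcard⟩ := exists_partition_of_sum_eq s hs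
  calc ∑ D ∈ P, ∏ i, (s i).choose (D i) = ∑ D ∈ P, ∏ i, (#(V i)).choose (D i) := by
        simp only [hcard]
    _ ≤ #(blowupGraph r n m P V).edges := sum_prod_choose_le_card_edges_blowupGraph hP hdisj
    _ ≤ exNum r 𝓕 n := (hfree V hdisj hcover).card_edges_le_exNum

lemma lagrangePolyP_max_sub_div_le_exNum_div_choose {r m n : ℕ} {P : Finset (Fin m → ℕ)}
    (hP : ∀ D ∈ P, ∑ i, D i = r) {𝓕 : Set (RGraph r)}
    (hfree : ∀ V : Fin m → Finset (Fin n),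
      (∀ i j, i ≠ j → Disjoint (V i) (V j)) → univ.biUnion V = univ →
      RGraph.Free 𝓕 (blowupGraph r n m P V))
    {x : Fin m → ℝ} (hx : x ∈ stdSimplex ℝ (Fin m)) (hn : r < n) :
    lagrangePolyP r m P (fun i => max (x i - r / n) 0) ≤ exNum r 𝓕 n / n.choose r := by
  obtain ⟨s, hs, hxs⟩ := exists_sum_eq_and_mul_le_add_one hx n
  have hn0 : (0 : ℝ) < n := by exact_mod_cast (Nat.zero_le r).trans_lt hn
  have hscale : (n : ℝ) • (fun i => max (x i - r / n) 0) = fun i => max (x i * n - r) 0 := by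
    ext i
    rw [Pi.smul_apply, smul_eq_mul, mul_max_of_nonneg _ _ hn0.le, mul_sub,
      mul_div_cancel₀ _ hn0.ne', mul_zero, mul_comm]
  have hscaled : (n : ℝ) ^ r * lagrangePolyP r m P (fun i => max (x i - r / n) 0) ≤
      r.factorial * exNum r 𝓕 n := by
    rw [← lagrangePolyP_smul hP, hscale]
    refine (lagrangePolyP_max_sub_le hP s hxs).trans ?_
    gcongr
    exact_mod_cast sum_prod_choose_le_exNum hP hfree s hs
  have hnonneg := lagrangePolyP_nonneg (P := P) (r := r)
    (fun i => le_max_right (x i - r / n) 0 : 0 ≤ fun i => max (x i - r / n) 0)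
  rw [le_div_iff₀ (Nat.cast_pos.mpr (Nat.choose_pos hn.le))]
  calc _ ≤ lagrangePolyP r m P (fun i => max (x i - r / n) 0) * (n ^ r / r.factorial) :=
        mul_le_mul_of_nonneg_left (Nat.choose_le_pow_div r n) hnonneg
    _ ≤ exNum r 𝓕 n := by
      rw [mul_div_assoc', div_le_iff₀ (by positivity)]
      linarith

theorem stmt12_general (r m : ℕ)
    (P : Finset (Fin m → ℕ)) (hP : ∀ D ∈ P, ∑ i, D i = r)
    (𝓕 : Set (RGraph r))
    (hfree : ∀ n : ℕ, ∀ V : Fin m → Finset (Fin n),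
      (∀ i j, i ≠ j → Disjoint (V i) (V j)) →
      Finset.univ.biUnion V = Finset.univ →
      RGraph.Free 𝓕 (blowupGraph r n m P V)) :
    lagrangianP r m P ≤
      liminf (fun n : ℕ => (exNum r 𝓕 n : ℝ) / (n.choose r : ℝ)) atTop := by
  have hcobdd : IsCoboundedUnder (· ≥ ·) atTop
      (fun n : ℕ => (exNum r 𝓕 n : ℝ) / (n.choose r : ℝ)) :=
    isCoboundedUnder_ge_of_le atTop (exNum_div_choose_le_one 𝓕)
  refine Real.sSup_le ?_ (le_liminf_of_le hcobdd (Eventually.of_forall fun n => by positivity))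
  rintro _ ⟨x, hx, rfl⟩
  have hlim := tendsto_lagrangePolyP_max_sub_div (P := P) (r := r) hx.1 r
  rw [← hlim.liminf_eq]
  refine liminf_le_liminf ?_ hlim.isBoundedUnder_ge hcobdd
  filter_upwards [eventually_gt_atTop r] with n hn
  exact lagrangePolyP_max_sub_div_le_exNum_div_choose hP (hfree n) hx hn

/-- If every blow-up of the `r`-pattern `P` (over all choices of disjoint sets
`V_1,…,V_m`) is `𝓕`-free, then the Turán density of `𝓕` is at least `Λ_P`. -/
theorem stmt12 (r m : ℕ) (hr : 2 ≤ r) (hm : 1 ≤ m)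
    (P : Finset (Fin m → ℕ)) (hP : ∀ D ∈ P, ∑ i, D i = r)
    (𝓕 : Set (RGraph r))
    (hfree : ∀ n : ℕ, ∀ V : Fin m → Finset (Fin n),
      (∀ i j, i ≠ j → Disjoint (V i) (V j)) →
      Finset.univ.biUnion V = Finset.univ →
      RGraph.Free 𝓕 (blowupGraph r n m P V)) :
    lagrangianP r m P ≤
      liminf (fun n : ℕ => (exNum r 𝓕 n : ℝ) / (n.choose r : ℝ)) atTop :=
  stmt12_general r m P hP 𝓕 hfree
end
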